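/- arXiv:1107.3419 — 2 statements merged into one kernel-verified Lean document; each statement's English description precedes it below -/
import Mathlib

section
/- Let (π̂_{s,t})_{s≤t} be a deterministic flow of partitions. Then for every s ∈ ℝ the left limit π̂_{s−,s} := lim_{r↑s} π̂_{r,s} exists; that is, for every n ∈ ℕ there exist ε > 0 and a partition ρ_n of [n] = {1,…,n} such that π̂^{[n]}_{r,s} = ρ_n for all r ∈ (s−ε, s). -/
/-!  Partitions of `ℕ` as equivalence relations (setoids), blocks ordered by
their least element (0-indexed), and the coagulation operator. -/

/-- The least element of the block of `a` in the partition `π` of `ℕ`. -/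
noncomputable def leaderOf (π : Setoid ℕ) (a : ℕ) : ℕ := sInf {k | π.r a k}

/-- The (0-based) index of the block of `a` among the blocks of `π`, the blocks
being ordered by increasing least element. -/
noncomputable def blockIdx (π : Setoid ℕ) (a : ℕ) : ℕ :=
  Set.ncard {l | l < leaderOf π a ∧ leaderOf π l = l}

/-- The `i`-th block (0-based) of the partition `π`; it is empty when `π` has
fewer than `i + 1` blocks. -/
def block (π : Setoid ℕ) (i : ℕ) : Set ℕ := {a | blockIdx π a = i}

/-- The coagulation `Coag π σ` of the partitions `π` and `σ` : two integers are
related iff the indices of their `π`-blocks lie in a common block of `σ`;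
equivalently, the `i`-th block of `Coag π σ` is `⋃_{j ∈ σ(i)} π(j)`. -/
noncomputable def Coag (π σ : Setoid ℕ) : Setoid ℕ := Setoid.comap (blockIdx π) σ

/-- The partition `O_[∞]` of `ℕ` into singletons. -/
def eqSetoid : Setoid ℕ := ⟨Eq, ⟨fun _ => rfl, fun h => h.symm, fun h₁ h₂ => h₁.trans h₂⟩⟩

/-- `restTrivial π n` says that the restriction `π^{[n]}` of `π` to the first
`n` integers is the partition `O_[n]` into singletons. -/
def restTrivial (π : Setoid ℕ) (n : ℕ) : Prop := ∀ i < n, ∀ j < n, π.r i j → i = j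

/-- A deterministic flow of partitions `(π̂_{s,t})_{s ≤ t}`. -/
structure IsDetFlow (π : ∀ s t : ℝ, s ≤ t → Setoid ℕ) : Prop where
  /-- cocycle property -/
  cocycle : ∀ (r s t : ℝ) (h₁ : r < s) (h₂ : s < t),
    π r t (h₁.le.trans h₂.le) = Coag (π s t h₂.le) (π r s h₁.le)
  /-- `π̂_{s,s} = O_[∞]` -/
  diag : ∀ s : ℝ, π s s le_rfl = eqSetoid
  /-- right regularity -/
  right_reg : ∀ (s : ℝ) (n : ℕ), ∃ ε > 0, ∀ (t : ℝ) (h : s ≤ t), t < s + ε →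
    restTrivial (π s t h) n
  /-- left regularity -/
  left_reg : ∀ (s : ℝ) (n : ℕ), ∃ ε > 0, ∀ r : ℝ, s - ε < r → r < s →
    ∃ δ > 0, δ < s - r ∧ ∀ (t : ℝ) (h : r ≤ t), s - δ < t → t < s → restTrivial (π r t h) n

lemma rel_leader (π : Setoid ℕ) (a : ℕ) : π.r a (leaderOf π a) :=
  Nat.sInf_mem ⟨a, π.refl a⟩

lemma leader_le (π : Setoid ℕ) (a : ℕ) : leaderOf π a ≤ a :=
  Nat.sInf_le (π.refl a)

lemma leader_eq_of_rel (π : Setoid ℕ) {a b : ℕ} (h : π.r a b) :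
    leaderOf π a = leaderOf π b := by
  unfold leaderOf
  congr 1
  ext k
  exact ⟨fun hk => π.trans (π.symm h) hk, fun hk => π.trans h hk⟩

lemma leader_isLeader (π : Setoid ℕ) (a : ℕ) :
    leaderOf π (leaderOf π a) = leaderOf π a :=
  (leader_eq_of_rel π (rel_leader π a)).symm

lemma blockIdx_le (π : Setoid ℕ) (a : ℕ) : blockIdx π a ≤ a := by
  have h1 : blockIdx π a ≤ leaderOf π a := by
    have : {l | l < leaderOf π a ∧ leaderOf π l = l} ⊆ (Finset.Iio (leaderOf π a) : Set ℕ) := by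
      intro l hl
      simpa using hl.1
    calc blockIdx π a ≤ Set.ncard ((Finset.Iio (leaderOf π a) : Finset ℕ) : Set ℕ) :=
          Set.ncard_le_ncard this (Finset.Iio (leaderOf π a)).finite_toSet
      _ = leaderOf π a := by rw [Set.ncard_coe_finset]; simp
  exact h1.trans (leader_le π a)

lemma ncard_leaders_lt {π : Setoid ℕ} {L L' : ℕ} (hL : leaderOf π L = L) (h : L < L') :
    Set.ncard {l | l < L ∧ leaderOf π l = l} < Set.ncard {l | l < L' ∧ leaderOf π l = l} := by
  apply Set.ncard_lt_ncard
  · constructor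
    · intro l hl
      exact ⟨hl.1.trans h, hl.2⟩
    · intro hsub
      have : L ∈ {l | l < L ∧ leaderOf π l = l} := hsub ⟨h, hL⟩
      exact lt_irrefl L this.1
  · apply Set.Finite.subset (Set.finite_Iio L')
    intro l hl
    exact hl.1

lemma blockIdx_eq_iff (π : Setoid ℕ) (a b : ℕ) :
    blockIdx π a = blockIdx π b ↔ π.r a b := by
  constructor
  · intro h
    have hlead : leaderOf π a = leaderOf π b := by
      rcases lt_trichotomy (leaderOf π a) (leaderOf π b) with hlt | heq | hgt
      · exact absurd h (ne_of_lt (ncard_leaders_lt (leader_isLeader π a) hlt))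
      · exact heq
      · exact absurd h.symm (ne_of_lt (ncard_leaders_lt (leader_isLeader π b) hgt))
    exact π.trans (rel_leader π a) (hlead ▸ π.symm (rel_leader π b))
  · intro h
    unfold blockIdx
    rw [leader_eq_of_rel π h]

/-- existence of the left limit `π̂_{s-,s}`.
For a deterministic flow of partitions, for every `s ∈ ℝ` and `n ∈ ℕ` there
exist `ε > 0` and a partition `ρ` of `{0, …, n-1}` such that the restriction
`π̂^{[n]}_{r,s}` equals `ρ` for all `r ∈ (s - ε, s)`. -/
theorem stmt2 (π : ∀ s t : ℝ, s ≤ t → Setoid ℕ) (hπ : IsDetFlow π) (s : ℝ) (n : ℕ) :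
    ∃ ε > 0, ∃ ρ : Setoid (Fin n), ∀ r : ℝ, s - ε < r → ∀ (hr : r < s),
      ∀ i j : Fin n, ((π r s hr.le).r i.val j.val ↔ ρ.r i j) := by
  obtain ⟨ε, hε, hL⟩ := hπ.left_reg s n
  -- key: near s, the restriction of π r s agrees with π t s for t close enough to s
  have key : ∀ r, s - ε < r → ∀ (hr : r < s), ∃ δ > 0, ∀ t, s - δ < t → ∀ (ht : t < s),
      ∀ i j : Fin n, ((π r s hr.le).r i.val j.val ↔ (π t s ht.le).r i.val j.val) := by
    intro r hrε hr
    obtain ⟨δ, hδ, hδr, htriv⟩ := hL r hrε hr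
    refine ⟨δ, hδ, fun t htδ ht i j => ?_⟩
    have hrt : r < t := by linarith
    have htrivial : restTrivial (π r t hrt.le) n := htriv t hrt.le htδ ht
    have hco := hπ.cocycle r t s hrt ht
    rw [hco]
    show (π r t hrt.le).r (blockIdx (π t s ht.le) i.val) (blockIdx (π t s ht.le) j.val) ↔ _
    constructor
    · intro h
      have hi : blockIdx (π t s ht.le) i.val < n := lt_of_le_of_lt (blockIdx_le _ _) i.isLt
      have hj : blockIdx (π t s ht.le) j.val < n := lt_of_le_of_lt (blockIdx_le _ _) j.isLt
      have heq := htrivial _ hi _ hj h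
      exact (blockIdx_eq_iff _ _ _).mp heq
    · intro h
      have heq := (blockIdx_eq_iff (π t s ht.le) i.val j.val).mpr h
      rw [heq]
  have hmid : s - ε < s - ε / 2 := by linarith
  have hmid2 : s - ε / 2 < s := by linarith
  refine ⟨ε, hε, Setoid.comap (fun i : Fin n => i.val) (π (s - ε / 2) s hmid2.le),
    fun r hrε hr i j => ?_⟩
  obtain ⟨δ₁, hδ₁, h₁⟩ := key r hrε hr
  obtain ⟨δ₂, hδ₂, h₂⟩ := key (s - ε / 2) hmid hmid2
  set t := s - min δ₁ δ₂ / 2 with ht_def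
  have htpos : (0 : ℝ) < min δ₁ δ₂ := lt_min hδ₁ hδ₂
  have ht : t < s := by simp only [ht_def]; linarith
  have ht1 : s - δ₁ < t := by
    have := min_le_left δ₁ δ₂; simp only [ht_def]; linarith
  have ht2 : s - δ₂ < t := by
    have := min_le_right δ₁ δ₂; simp only [ht_def]; linarith
  exact ((h₁ t ht1 ht i j).trans (h₂ t ht2 ht i j).symm)
end

section
/- Let π be a partition of ℕ each of whose blocks has an asymptotic frequency. Then for every subset B ⊆ ℕ and every n ∈ ℕ, the counting densities of the set ⋃_{j∈B} π(j) satisfy: ∑_{j∈B, j≤n} |π(j)| ≤ liminf_{m→∞} #((⋃_{j∈B} π(j)) ∩ {1,…,m})/m ≤ limsup_{m→∞} #((⋃_{j∈B} π(j)) ∩ {1,…,m})/m ≤ ∑_{j∈B, j≤n} |π(j)| + (1 − ∑_{l=1}^{n} |π(l)|). -/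
/-- `A ⊆ ℕ` has asymptotic frequency `l`. -/
def HasFreq (A : Set ℕ) (l : ℝ) : Prop :=
  Filter.Tendsto (fun m : ℕ => ((A ∩ Set.Iio m).ncard : ℝ) / m) Filter.atTop (nhds l)

/-- The counting density of `A ⊆ ℕ` at level `m`. -/
noncomputable def density (A : Set ℕ) (m : ℕ) : ℝ := ((A ∩ Set.Iio m).ncard : ℝ) / m

lemma finInter (A : Set ℕ) (m : ℕ) : (A ∩ Set.Iio m).Finite :=
  (Set.finite_Iio m).inter_of_right A

lemma density_nonneg (A : Set ℕ) (m : ℕ) : 0 ≤ density A m :=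
  div_nonneg (Nat.cast_nonneg _) (Nat.cast_nonneg _)

lemma ncard_le (A : Set ℕ) (m : ℕ) : (A ∩ Set.Iio m).ncard ≤ m := by
  have h := Set.ncard_le_ncard (Set.inter_subset_right (s := A) (t := Set.Iio m))
    (Set.finite_Iio m)
  simpa [← Finset.coe_range, Set.ncard_coe_finset] using h

lemma density_le_one (A : Set ℕ) (m : ℕ) : density A m ≤ 1 := by
  unfold density
  apply div_le_one_of_le₀
  · exact_mod_cast ncard_le A m
  · positivity

lemma density_mono {A C : Set ℕ} (h : A ⊆ C) (m : ℕ) : density A m ≤ density C m := by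
  unfold density
  gcongr
  · exact finInter C m

lemma density_union_le (A C : Set ℕ) (m : ℕ) :
    density (A ∪ C) m ≤ density A m + density C m := by
  unfold density
  rw [Set.union_inter_distrib_right, ← add_div]
  gcongr
  exact_mod_cast Set.ncard_union_le _ _

lemma density_union_eq {A C : Set ℕ} (h : Disjoint A C) (m : ℕ) :
    density (A ∪ C) m = density A m + density C m := by
  unfold density
  rw [Set.union_inter_distrib_right, Set.ncard_union_eq
    (h.mono Set.inter_subset_left Set.inter_subset_left) (finInter A m) (finInter C m)]
  push_cast
  rw [add_div]

lemma density_empty (m : ℕ) : density (∅ : Set ℕ) m = 0 := by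
  simp [density]

lemma density_biUnion (g : ℕ → Set ℕ) (hd : Pairwise (Function.onFun Disjoint g))
    (S : Finset ℕ) (m : ℕ) :
    density (⋃ j ∈ S, g j) m = ∑ j ∈ S, density (g j) m := by
  classical
  induction S using Finset.induction with
  | empty => simp [density_empty]
  | @insert a S haS ih =>
      rw [Finset.sum_insert haS, ← ih, Finset.set_biUnion_insert, density_union_eq]
      exact Set.disjoint_iUnion₂_right.mpr fun j hj => hd (fun h => haS (h ▸ hj))

lemma density_compl (X : Set ℕ) (m : ℕ) (hm : 1 ≤ m) :
    density Xᶜ m = 1 - density X m := by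
  have hun : (X ∩ Set.Iio m) ∪ (Xᶜ ∩ Set.Iio m) = Set.Iio m := by
    rw [← Set.union_inter_distrib_right, Set.union_compl_self, Set.univ_inter]
  have hd : Disjoint (X ∩ Set.Iio m) (Xᶜ ∩ Set.Iio m) :=
    (disjoint_compl_right).mono Set.inter_subset_left Set.inter_subset_left
  have hcard : (X ∩ Set.Iio m).ncard + (Xᶜ ∩ Set.Iio m).ncard = m := by
    rw [← Set.ncard_union_eq hd (finInter X m) (finInter Xᶜ m), hun]
    simp [← Finset.coe_range, Set.ncard_coe_finset]
  have hm0 : (m : ℝ) ≠ 0 := by positivity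
  unfold density
  field_simp
  have : ((Xᶜ ∩ Set.Iio m).ncard : ℝ) = m - (X ∩ Set.Iio m).ncard := by
    have := congrArg (fun k : ℕ => (k : ℝ)) hcard
    push_cast at this
    linarith
  linarith

lemma block_pairwise (π : Setoid ℕ) : Pairwise (Function.onFun Disjoint (block π)) := by
  intro i j hij
  rw [Function.onFun, Set.disjoint_left]
  intro a hai haj
  exact hij (hai ▸ haj)

/-- bounds on the counting densities of a union of blocks.
If every block of `π` has an asymptotic frequency then, for any `B ⊆ ℕ` and any
`n`, writing `U = ⋃_{j ∈ B} π(j)`,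
`∑_{j ∈ B, j < n} |π(j)| ≤ liminf_m #(U ∩ [m])/m ≤ limsup_m #(U ∩ [m])/m
  ≤ ∑_{j ∈ B, j < n} |π(j)| + (1 - ∑_{l < n} |π(l)|)`. -/
theorem stmt5 (π : Setoid ℕ) (f : ℕ → ℝ) (hf : ∀ l : ℕ, HasFreq (block π l) (f l))
    (B : Set ℕ) (n : ℕ) :
    (∑ j ∈ Finset.range n, Set.indicator B f j) ≤
        Filter.liminf (density (⋃ j ∈ B, block π j)) Filter.atTop ∧
      Filter.liminf (density (⋃ j ∈ B, block π j)) Filter.atTop ≤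
        Filter.limsup (density (⋃ j ∈ B, block π j)) Filter.atTop ∧
      Filter.limsup (density (⋃ j ∈ B, block π j)) Filter.atTop ≤
        (∑ j ∈ Finset.range n, Set.indicator B f j) + (1 - ∑ l ∈ Finset.range n, f l) := by
  classical
  set U : Set ℕ := ⋃ j ∈ B, block π j with hU
  set S : Finset ℕ := (Finset.range n).filter (· ∈ B) with hS
  set V : Set ℕ := ⋃ j ∈ S, block π j with hV
  set X : Set ℕ := ⋃ l ∈ Finset.range n, block π l with hX
  -- indicator sum equals sum over S
  have hsum : (∑ j ∈ Finset.range n, Set.indicator B f j) = ∑ j ∈ S, f j := by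
    rw [hS, Finset.sum_filter]
    exact Finset.sum_congr rfl fun j _ => by rw [Set.indicator_apply]
  -- tendsto facts
  have hVt : Filter.Tendsto (density V) Filter.atTop (nhds (∑ j ∈ S, f j)) := by
    have : density V = fun m => ∑ j ∈ S, density (block π j) m := by
      funext m; exact density_biUnion _ (block_pairwise π) S m
    rw [this]
    exact tendsto_finset_sum _ fun j _ => hf j
  have hXt : Filter.Tendsto (density X) Filter.atTop
      (nhds (∑ l ∈ Finset.range n, f l)) := by
    have : density X = fun m => ∑ l ∈ Finset.range n, density (block π l) m := by
      funext m; exact density_biUnion _ (block_pairwise π) _ m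
    rw [this]
    exact tendsto_finset_sum _ fun l _ => hf l
  have hXc : Filter.Tendsto (density Xᶜ) Filter.atTop
      (nhds (1 - ∑ l ∈ Finset.range n, f l)) := by
    apply Filter.Tendsto.congr' _ (tendsto_const_nhds.sub hXt)
    filter_upwards [Filter.eventually_ge_atTop 1] with m hm
    exact (density_compl X m hm).symm
  -- inclusions
  have hVU : V ⊆ U := by
    intro x hx
    simp only [hV, hU, Set.mem_iUnion] at hx ⊢
    obtain ⟨j, hj, hxj⟩ := hx
    exact ⟨j, (Finset.mem_filter.mp hj).2, hxj⟩
  have hUVX : U ⊆ V ∪ Xᶜ := by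
    intro x hx
    simp only [hU, Set.mem_iUnion] at hx
    obtain ⟨j, hjB, hxj⟩ := hx
    by_cases hjn : j < n
    · left
      simp only [hV, Set.mem_iUnion]
      exact ⟨j, Finset.mem_filter.mpr ⟨Finset.mem_range.mpr hjn, hjB⟩, hxj⟩
    · right
      simp only [hX, Set.mem_compl_iff, Set.mem_iUnion, not_exists]
      intro l hl hxl
      have h1 : blockIdx π x = j := hxj
      have h2 : blockIdx π x = l := hxl
      have := Finset.mem_range.mp hl
      omega

  -- boundedness facts
  have hbddU_above : Filter.IsBoundedUnder (· ≤ ·) Filter.atTop (density U) :=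
    Filter.isBoundedUnder_of ⟨1, fun m => density_le_one U m⟩
  have hbddU_below : Filter.IsBoundedUnder (· ≥ ·) Filter.atTop (density U) :=
    Filter.isBoundedUnder_of ⟨0, fun m => density_nonneg U m⟩
  -- lower bound
  have h1 : (∑ j ∈ S, f j) ≤ Filter.liminf (density U) Filter.atTop := by
    rw [← hVt.liminf_eq]
    exact Filter.liminf_le_liminf (Filter.Eventually.of_forall fun m => density_mono hVU m)
      (Filter.isBoundedUnder_of ⟨0, fun m => density_nonneg V m⟩) hbddU_above.isCoboundedUnder_ge
  -- middle
  have h2 : Filter.liminf (density U) Filter.atTop ≤ Filter.limsup (density U) Filter.atTop :=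
    Filter.liminf_le_limsup hbddU_above hbddU_below
  -- upper bound
  have h3 : Filter.limsup (density U) Filter.atTop ≤
      (∑ j ∈ S, f j) + (1 - ∑ l ∈ Finset.range n, f l) := by
    have ht : Filter.Tendsto (fun m => density V m + density Xᶜ m) Filter.atTop
        (nhds ((∑ j ∈ S, f j) + (1 - ∑ l ∈ Finset.range n, f l))) := hVt.add hXc
    rw [← ht.limsup_eq]
    refine Filter.limsup_le_limsup (Filter.Eventually.of_forall fun m => ?_)
      hbddU_below.isCoboundedUnder_le ht.isBoundedUnder_le
    exact le_trans (density_mono hUVX m) (density_union_le V Xᶜ m)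
  exact ⟨hsum ▸ h1, h2, hsum ▸ h3⟩
end
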